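/- arXiv:1606.00578 — 6 statements merged into one kernel-verified Lean document; each statement's English description precedes it below -/
import Mathlib

section
/- For pairwise distinct complex numbers w, z_1, ..., z_{m+1}: g(w,z_1)·∏_{i=2}^{m+1} f(z_i,w) − ∑_{ℓ=2}^{m+1} g(w,z_ℓ)·g(z_ℓ,z_1)·∏_{i=2, i≠ℓ}^{m+1} f(z_i,z_ℓ) = g(w,z_1)·∏_{i=2}^{m+1} f(z_i,z_1). -/
noncomputable def fqB (q : ℝ) (z w : ℂ) : ℂ := (z - (q:ℂ)^2 * w) / (z - w)
noncomputable def gqB (q : ℝ) (z w : ℂ) : ℂ := -((1 - (q:ℂ)^2) * z) / (z - w)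

/-!
Everything rests on the three-term exchange relation
`g(w,x) f(y,w) = g(w,x) f(y,x) + g(w,y) g(y,x)`, a rational-function identity.
The claim then holds for any finite family of points `z_i` distinct from `w`, `x` and from each
other, by induction on the family: after adding a point `y`, the exchange relation (with `x := z_l`)
splits each summand into one with `f(y,w)` and one with `g(w,y) g(y,z_l)`, and the two resulting sums
are the induction hypothesis at `w` and at `y`; a last exchange relation recombines the two.
-/

theorem gqB_mul_fqB_exchange (q : ℝ) {w x y : ℂ} (hwx : w ≠ x) (hyw : y ≠ w) (hyx : y ≠ x) :
    gqB q w x * fqB q y w = gqB q w x * fqB q y x + gqB q w y * gqB q y x := by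
  have h₁ : w - x ≠ 0 := sub_ne_zero.mpr hwx
  have h₂ : y - w ≠ 0 := sub_ne_zero.mpr hyw
  have h₃ : y - x ≠ 0 := sub_ne_zero.mpr hyx
  have h₄ : w - y ≠ 0 := sub_ne_zero.mpr hyw.symm
  unfold gqB fqB
  field_simp
  ring

theorem gqB_mul_prod_fqB_sub_sum {ι : Type*} [DecidableEq ι] (q : ℝ) (S : Finset ι) (z : ι → ℂ)
    (hz : Set.InjOn z S) {x : ℂ} (hx : ∀ i ∈ S, z i ≠ x) {w : ℂ} (hw : ∀ i ∈ S, z i ≠ w)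
    (hwx : w ≠ x) :
    gqB q w x * ∏ i ∈ S, fqB q (z i) w
      - ∑ l ∈ S, gqB q w (z l) * gqB q (z l) x * ∏ i ∈ S.erase l, fqB q (z i) (z l)
    = gqB q w x * ∏ i ∈ S, fqB q (z i) x := by
  induction S using Finset.induction_on generalizing w with
  | empty => simp
  | insert a S haS ih =>
    have hz' : Set.InjOn z S := hz.mono (by simp)
    have hx' : ∀ i ∈ S, z i ≠ x := fun i hi => hx i (Finset.mem_insert_of_mem hi)
    have hw' : ∀ i ∈ S, z i ≠ w := fun i hi => hw i (Finset.mem_insert_of_mem hi)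
    have hza : ∀ i ∈ S, z i ≠ z a := fun i hi h =>
      haS (hz (by simp [hi]) (by simp) h ▸ hi)
    have haw : z a ≠ w := hw a (Finset.mem_insert_self a S)
    have hax : z a ≠ x := hx a (Finset.mem_insert_self a S)
    have hsum : ∑ l ∈ S, gqB q w (z l) * gqB q (z l) x *
          ∏ i ∈ (insert a S).erase l, fqB q (z i) (z l)
        = fqB q (z a) w * ∑ l ∈ S, gqB q w (z l) * gqB q (z l) x *
              ∏ i ∈ S.erase l, fqB q (z i) (z l)
          - gqB q w (z a) * ∑ l ∈ S, gqB q (z a) (z l) * gqB q (z l) x *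
              ∏ i ∈ S.erase l, fqB q (z i) (z l) := by
      rw [Finset.mul_sum, Finset.mul_sum, ← Finset.sum_sub_distrib]
      refine Finset.sum_congr rfl fun l hl => ?_
      have hla : l ≠ a := fun h => haS (h ▸ hl)
      rw [Finset.erase_insert_of_ne hla.symm,
        Finset.prod_insert fun h => haS (Finset.mem_of_mem_erase h)]
      linear_combination -(gqB q (z l) x * ∏ i ∈ S.erase l, fqB q (z i) (z l)) *
        gqB_mul_fqB_exchange q (hw' l hl).symm haw (hza l hl).symm
    rw [Finset.prod_insert haS, Finset.prod_insert haS, Finset.sum_insert haS,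
      Finset.erase_insert haS, hsum]
    linear_combination fqB q (z a) w * ih hz' hx' hw' hwx
      - gqB q w (z a) * ih hz' hx' hza hax
      + (∏ i ∈ S, fqB q (z i) x) * gqB_mul_fqB_exchange q hwx haw hax

theorem stmt2_general (q : ℝ) (m : ℕ)
    (w : ℂ) (z : ℕ → ℂ)
    (hinj : Set.InjOn z (Set.Icc 1 (m + 1)))
    (hw : ∀ i ∈ Finset.Icc 1 (m + 1), z i ≠ w) :
    gqB q w (z 1) * ∏ i ∈ Finset.Icc 2 (m + 1), fqB q (z i) w
      - ∑ l ∈ Finset.Icc 2 (m + 1),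
          gqB q w (z l) * gqB q (z l) (z 1) *
            ∏ i ∈ (Finset.Icc 2 (m + 1)).erase l, fqB q (z i) (z l)
    = gqB q w (z 1) * ∏ i ∈ Finset.Icc 2 (m + 1), fqB q (z i) (z 1) := by
  have hsub : Finset.Icc 2 (m + 1) ⊆ Finset.Icc 1 (m + 1) := Finset.Icc_subset_Icc_left (by omega)
  have h1 : 1 ∈ Finset.Icc 1 (m + 1) := by simp
  refine gqB_mul_prod_fqB_sub_sum q _ z (hinj.mono ?_) (fun i hi h => ?_)
    (fun i hi => hw i (hsub hi)) (hw 1 h1).symm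
  · rw [Finset.coe_Icc]
    exact Set.Icc_subset_Icc_left (by omega)
  · have := hinj (by simpa using hsub hi) (by simp) h
    simp [this] at hi

theorem stmt2 (q : ℝ) (hq : 0 < q) (hq1 : q < 1) (m : ℕ) (hm : 1 ≤ m)
    (w : ℂ) (z : ℕ → ℂ)
    (hinj : Set.InjOn z (Set.Icc 1 (m + 1)))
    (hw : ∀ i ∈ Finset.Icc 1 (m + 1), z i ≠ w) :
    gqB q w (z 1) * ∏ i ∈ Finset.Icc 2 (m + 1), fqB q (z i) w
      - ∑ l ∈ Finset.Icc 2 (m + 1),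
          gqB q w (z l) * gqB q (z l) (z 1) *
            ∏ i ∈ (Finset.Icc 2 (m + 1)).erase l, fqB q (z i) (z l)
    = gqB q w (z 1) * ∏ i ∈ Finset.Icc 2 (m + 1), fqB q (z i) (z 1) :=
  stmt2_general q m w z hinj hw
end

section
/- For pairwise distinct complex numbers w, z_1, ..., z_{m+1}: g(z_1,w)·∏_{i=2}^{m+1} f(z_i,w) + ∑_{ℓ=2}^{m+1} g(z_ℓ,w)·g(z_1,z_ℓ)·∏_{i=2, i≠ℓ}^{m+1} f(z_i,z_ℓ) = g(z_1,w)·∏_{i=2}^{m+1} f(z_i,z_1). -/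
/-! The identity is proved for an arbitrary finite family `z i`, `i ∈ S`, in place of
`z 2, …, z (m+1)`, by induction on `S`. Adding a point `a` to `S` multiplies the first term by
`f(z a, w)` and creates a new residue term; the three-point identity
`g(x,u) f(a,u) + g(a,u) g(x,a) = g(x,u) f(a,x)`, applied once with `x` and once with each `z l`,
recombines everything into the induction hypotheses at `w` and at `z a`. -/

open Finset

section
variable (q : ℝ)

theorem gqB_mul_fqB_add_gqB_mul_gqB {x u a : ℂ} (hxu : x ≠ u) (hau : a ≠ u) (hax : a ≠ x) :
    gqB q x u * fqB q a u + gqB q a u * gqB q x a = gqB q x u * fqB q a x := by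
  have hxu' : x - u ≠ 0 := sub_ne_zero.mpr hxu
  have hau' : a - u ≠ 0 := sub_ne_zero.mpr hau
  have hax' : a - x ≠ 0 := sub_ne_zero.mpr hax
  have hxa' : x - a ≠ 0 := sub_ne_zero.mpr hax.symm
  unfold gqB fqB
  field_simp
  ring

theorem gqB_mul_prod_fqB_add_sum_eq {ι : Type*} [DecidableEq ι] (z : ι → ℂ) (S : Finset ι)
    {x w : ℂ} (hxw : x ≠ w) (hw : ∀ i ∈ S, z i ≠ w) (hx : ∀ i ∈ S, z i ≠ x)
    (hinj : Set.InjOn z S) :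
    gqB q x w * ∏ i ∈ S, fqB q (z i) w
      + ∑ l ∈ S, gqB q (z l) w * gqB q x (z l) * ∏ i ∈ S.erase l, fqB q (z i) (z l)
    = gqB q x w * ∏ i ∈ S, fqB q (z i) x := by
  induction S using Finset.induction_on generalizing w with
  | empty => simp
  | insert a S ha ih =>
    rw [coe_insert, Set.injOn_insert ha] at hinj
    have haw : z a ≠ w := hw a (mem_insert_self a S)
    have hax : z a ≠ x := hx a (mem_insert_self a S)
    have hw' : ∀ i ∈ S, z i ≠ w := fun i hi => hw i (mem_insert_of_mem hi)
    have hx' : ∀ i ∈ S, z i ≠ x := fun i hi => hx i (mem_insert_of_mem hi)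
    have hza : ∀ i ∈ S, z i ≠ z a := fun i hi h => hinj.2 ⟨i, hi, h⟩
    have hsum : ∑ l ∈ S, gqB q (z l) w * gqB q x (z l) *
          ∏ i ∈ (insert a S).erase l, fqB q (z i) (z l)
        = fqB q (z a) w *
            ∑ l ∈ S, gqB q (z l) w * gqB q x (z l) * ∏ i ∈ S.erase l, fqB q (z i) (z l)
          + gqB q (z a) w *
            ∑ l ∈ S, gqB q (z l) (z a) * gqB q x (z l) * ∏ i ∈ S.erase l, fqB q (z i) (z l) := by
      rw [mul_sum, mul_sum, ← sum_add_distrib]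
      refine sum_congr rfl fun l hl => ?_
      have hla : a ≠ l := fun h => ha (h ▸ hl)
      rw [erase_insert_of_ne hla, prod_insert fun h => ha (mem_of_mem_erase h)]
      linear_combination -(gqB q x (z l) * ∏ i ∈ S.erase l, fqB q (z i) (z l)) *
        gqB_mul_fqB_add_gqB_mul_gqB q (hw' l hl) haw (hza l hl).symm
    rw [prod_insert ha, prod_insert ha, sum_insert ha, erase_insert ha, hsum]
    linear_combination fqB q (z a) w * ih hxw hw' hx' hinj.1
      + gqB q (z a) w * ih hax.symm hza hx' hinj.1
      + (∏ i ∈ S, fqB q (z i) x) * gqB_mul_fqB_add_gqB_mul_gqB q hxw haw hax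

end

theorem stmt3_general (q : ℝ) (m : ℕ)
    (w : ℂ) (z : ℕ → ℂ)
    (hinj : Set.InjOn z (Set.Icc 1 (m + 1)))
    (hw : ∀ i ∈ Finset.Icc 1 (m + 1), z i ≠ w) :
    gqB q (z 1) w * ∏ i ∈ Finset.Icc 2 (m + 1), fqB q (z i) w
      + ∑ l ∈ Finset.Icc 2 (m + 1),
          gqB q (z l) w * gqB q (z 1) (z l) *
            ∏ i ∈ (Finset.Icc 2 (m + 1)).erase l, fqB q (z i) (z l)
    = gqB q (z 1) w * ∏ i ∈ Finset.Icc 2 (m + 1), fqB q (z i) (z 1) := by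
  have hsub : ((Icc 2 (m + 1) : Finset ℕ) : Set ℕ) ⊆ Set.Icc 1 (m + 1) := by
    intro i hi
    simp only [coe_Icc, Set.mem_Icc] at hi ⊢
    omega
  have h1 : (1 : ℕ) ∈ Set.Icc 1 (m + 1) := by simp
  refine gqB_mul_prod_fqB_add_sum_eq q z _ (hw 1 (by simp)) (fun i hi => hw i ?_)
    (fun i hi h => ?_) (hinj.mono hsub)
  · simp only [mem_Icc] at hi ⊢
    omega
  · have : i = 1 := hinj (hsub hi) h1 h
    simp only [mem_Icc] at hi
    omega

theorem stmt3 (q : ℝ) (hq : 0 < q) (hq1 : q < 1) (m : ℕ) (hm : 1 ≤ m)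
    (w : ℂ) (z : ℕ → ℂ)
    (hinj : Set.InjOn z (Set.Icc 1 (m + 1)))
    (hw : ∀ i ∈ Finset.Icc 1 (m + 1), z i ≠ w) :
    gqB q (z 1) w * ∏ i ∈ Finset.Icc 2 (m + 1), fqB q (z i) w
      + ∑ l ∈ Finset.Icc 2 (m + 1),
          gqB q (z l) w * gqB q (z 1) (z l) *
            ∏ i ∈ (Finset.Icc 2 (m + 1)).erase l, fqB q (z i) (z l)
    = gqB q (z 1) w * ∏ i ∈ Finset.Icc 2 (m + 1), fqB q (z i) (z 1) :=
  stmt3_general q m w z hinj hw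
end

section
/- For pairwise distinct complex numbers z_1,...,z_m and any ℓ with 1≤ℓ≤m: ∏_{i=1}^{ℓ-1} f(z_i,z_ℓ) + ∑_{t=ℓ+1}^{m} g(z_ℓ,z_t)·∏_{i=1, i≠ℓ}^{t-1} f(z_i,z_ℓ) = ∏_{i=1, i≠ℓ}^{m} f(z_i,z_ℓ). -/
/-! Writing `F n = ∏_{i ≤ n, i ≠ ℓ} f(z_i, z_ℓ)`, the identity `f(z, w) = 1 + g(w, z)` gives
`F t - F (t - 1) = g(z_ℓ, z_t) F (t - 1)` for `t > ℓ`, so the sum on the left telescopes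
from `F ℓ` to `F m`. -/

theorem one_add_gqB_eq_fqB (q : ℝ) {a b : ℂ} (h : a ≠ b) : 1 + gqB q b a = fqB q a b := by
  have hab : a - b ≠ 0 := sub_ne_zero.mpr h
  have hba : b - a ≠ 0 := sub_ne_zero.mpr h.symm
  unfold fqB gqB
  field_simp
  ring

namespace Finset

theorem add_sum_Icc_mul_pred_eq_of_succ {R : Type*} [Ring R] {F c : ℕ → R} {l m : ℕ}
    (hlm : l ≤ m) (hF : ∀ i ∈ Ico l m, F (i + 1) = (1 + c (i + 1)) * F i) :
    F l + ∑ t ∈ Icc (l + 1) m, c t * F (t - 1) = F m := by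
  rw [← Ico_add_one_right_eq_Icc, ← sum_Ico_add']
  have hstep : ∀ i ∈ Ico l m, c (i + 1) * F (i + 1 - 1) = F (i + 1) - F i := by
    intro i hi
    rw [hF i hi, Nat.add_sub_cancel, add_mul, one_mul, add_sub_cancel_left]
  rw [sum_congr rfl hstep, sum_Ico_sub F hlm, add_sub_cancel]

theorem Icc_one_erase_self (l : ℕ) : (Icc 1 l).erase l = Icc 1 (l - 1) := by
  ext i
  simp only [mem_erase, mem_Icc]
  omega

theorem prod_Icc_one_succ_erase {M : Type*} [CommMonoid M] (f : ℕ → M) {l n : ℕ}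
    (h : n + 1 ≠ l) :
    ∏ i ∈ (Icc 1 (n + 1)).erase l, f i = f (n + 1) * ∏ i ∈ (Icc 1 n).erase l, f i := by
  have hset : (Icc 1 (n + 1)).erase l = insert (n + 1) ((Icc 1 n).erase l) := by
    ext i
    simp only [mem_erase, mem_Icc, mem_insert]
    omega
  rw [hset, prod_insert (by simp)]

end Finset

open Finset in
theorem stmt4_general (q : ℝ) (m : ℕ)
    (z : ℕ → ℂ) (hinj : Set.InjOn z (Set.Icc 1 m))
    (l : ℕ) (hl : l ∈ Finset.Icc 1 m) :
    ∏ i ∈ Finset.Icc 1 (l - 1), fqB q (z i) (z l)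
      + ∑ t ∈ Finset.Icc (l + 1) m,
          gqB q (z l) (z t) *
            ∏ i ∈ (Finset.Icc 1 (t - 1)).erase l, fqB q (z i) (z l)
    = ∏ i ∈ (Finset.Icc 1 m).erase l, fqB q (z i) (z l) := by
  obtain ⟨hl1, hlm⟩ := mem_Icc.mp hl
  have hF : ∀ i ∈ Ico l m, ∏ j ∈ (Icc 1 (i + 1)).erase l, fqB q (z j) (z l) =
      (1 + gqB q (z l) (z (i + 1))) * ∏ j ∈ (Icc 1 i).erase l, fqB q (z j) (z l) := by
    intro i hi
    obtain ⟨hli, him⟩ := mem_Ico.mp hi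
    have hne : z (i + 1) ≠ z l :=
      hinj.ne ⟨by omega, by omega⟩ ⟨hl1, hlm⟩ (by omega)
    rw [one_add_gqB_eq_fqB q hne, prod_Icc_one_succ_erase _ (by omega)]
  rw [← Icc_one_erase_self l]
  exact add_sum_Icc_mul_pred_eq_of_succ
    (F := fun n ↦ ∏ j ∈ (Icc 1 n).erase l, fqB q (z j) (z l)) hlm hF

theorem stmt4 (q : ℝ) (hq : 0 < q) (hq1 : q < 1) (m : ℕ)
    (z : ℕ → ℂ) (hinj : Set.InjOn z (Set.Icc 1 m))
    (l : ℕ) (hl : l ∈ Finset.Icc 1 m) :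
    ∏ i ∈ Finset.Icc 1 (l - 1), fqB q (z i) (z l)
      + ∑ t ∈ Finset.Icc (l + 1) m,
          gqB q (z l) (z t) *
            ∏ i ∈ (Finset.Icc 1 (t - 1)).erase l, fqB q (z i) (z l)
    = ∏ i ∈ (Finset.Icc 1 m).erase l, fqB q (z i) (z l) :=
  stmt4_general q m z hinj l hl
end

section
/- For t≥2 and pairwise distinct nonzero complex numbers w, z_1, ..., z_t: (-1)^{t-1}·∏_{s=1}^{t-1} g(z_s,z_{s+1}) + (g(w,z_t)/g(z_t,z_1))·∏_{s=1}^{t-1} g(z_{s+1},z_s) = (g(w,z_t)/g(w,z_1))·∏_{s=1}^{t-1} g(z_{s+1},z_s). -/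
lemma mul_gqB_swap (q : ℝ) (a b : ℂ) : a * gqB q b a = -(b * gqB q a b) := by
  unfold gqB
  rw [← neg_sub b a, div_neg]
  ring

lemma prod_gqB_swap (q : ℝ) (z : ℕ → ℂ) (n : ℕ) :
    (-1) ^ n * (∏ s ∈ Finset.Icc 1 n, gqB q (z s) (z (s + 1))) * z (n + 1)
      = z 1 * ∏ s ∈ Finset.Icc 1 n, gqB q (z (s + 1)) (z s) := by
  induction n with
  | zero => simp
  | succ n ih =>
    rw [Finset.prod_Icc_succ_top (by omega), Finset.prod_Icc_succ_top (by omega)]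
    linear_combination gqB q (z (n + 1 + 1)) (z (n + 1)) * ih
      - (-1) ^ n * (∏ s ∈ Finset.Icc 1 n, gqB q (z s) (z (s + 1)))
        * mul_gqB_swap q (z (n + 1)) (z (n + 1 + 1))

lemma gqB_three_point {q : ℝ} (hq : q ^ 2 ≠ 1) {w a b : ℂ} (hw : w ≠ 0) (hb : b ≠ 0)
    (hwb : w ≠ b) :
    a / b + gqB q w b / gqB q b a = gqB q w b / gqB q w a := by
  have hc : 1 - (q : ℂ) ^ 2 ≠ 0 := by
    rw [sub_ne_zero]
    exact_mod_cast hq.symm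
  have hwb' : w - b ≠ 0 := sub_ne_zero.mpr hwb
  unfold gqB
  rw [div_div_eq_mul_div, div_div_eq_mul_div]
  field_simp
  ring

theorem stmt6_general (q : ℝ) (hq : 0 < q) (hq1 : q < 1) (t : ℕ) (ht : 2 ≤ t)
    (w : ℂ) (z : ℕ → ℂ)
    (hw : w ≠ 0) (hz : ∀ i ∈ Finset.Icc 1 t, z i ≠ 0)
    (hwz : ∀ i ∈ Finset.Icc 1 t, z i ≠ w) :
    (-1 : ℂ)^(t - 1) * (∏ s ∈ Finset.Icc 1 (t - 1), gqB q (z s) (z (s + 1)))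
      + gqB q w (z t) / gqB q (z t) (z 1) *
          ∏ s ∈ Finset.Icc 1 (t - 1), gqB q (z (s + 1)) (z s)
    = gqB q w (z t) / gqB q w (z 1) *
        ∏ s ∈ Finset.Icc 1 (t - 1), gqB q (z (s + 1)) (z s) := by
  have ht_mem : t ∈ Finset.Icc 1 t := Finset.mem_Icc.mpr ⟨by omega, le_rfl⟩
  have hzt := hz t ht_mem
  have hq2 : q ^ 2 ≠ 1 := (pow_lt_one₀ hq.le hq1 two_ne_zero).ne
  have hswap := prod_gqB_swap q z (t - 1)
  rw [Nat.sub_add_cancel (by omega)] at hswap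
  rw [← gqB_three_point hq2 hw hzt (hwz t ht_mem).symm, add_mul]
  congr 1
  field_simp
  linear_combination hswap

theorem stmt6 (q : ℝ) (hq : 0 < q) (hq1 : q < 1) (t : ℕ) (ht : 2 ≤ t)
    (w : ℂ) (z : ℕ → ℂ)
    (hw : w ≠ 0) (hz : ∀ i ∈ Finset.Icc 1 t, z i ≠ 0)
    (hwz : ∀ i ∈ Finset.Icc 1 t, z i ≠ w)
    (hinj : Set.InjOn z (Set.Icc 1 t)) :
    (-1 : ℂ)^(t - 1) * (∏ s ∈ Finset.Icc 1 (t - 1), gqB q (z s) (z (s + 1)))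
      + gqB q w (z t) / gqB q (z t) (z 1) *
          ∏ s ∈ Finset.Icc 1 (t - 1), gqB q (z (s + 1)) (z s)
    = gqB q w (z t) / gqB q w (z 1) *
        ∏ s ∈ Finset.Icc 1 (t - 1), gqB q (z (s + 1)) (z s) :=
  stmt6_general q hq hq1 t ht w z hw hz hwz
end

section
/- With Y_i(z,w) = f(z,w)^{-1}(R_i + g(z,w)) on U^{⊗k}, for 1≤i≤k−2 the Yang–Baxter relation Y_i(z_2,z_3) Y_{i+1}(z_1,z_3) Y_i(z_1,z_2) = Y_{i+1}(z_1,z_2) Y_i(z_1,z_3) Y_{i+1}(z_2,z_3) holds, whenever z_1, z_2, z_3 are pairwise distinct and all f-values appearing are nonzero. -/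
/-!
The operators `R_i` satisfy the Hecke relation `R² = (1 - q²) R + q²` and the braid relation
`R_i R_{i+1} R_i = R_{i+1} R_i R_{i+1}`. For any two such elements `x, y` of an algebra,
`(x + a)(y + b)(x + c) - (y + c)(x + b)(y + a) = (b t + a b + b c - a c)(x - y)` with `t = 1 - q²`,
and this scalar vanishes for `a = g(z₂,z₃)`, `b = g(z₁,z₃)`, `c = g(z₁,z₂)`; the factors `f⁻¹`
are scalars occurring on both sides. Both relations are checked on basis vectors: `R` acting on
positions `a, b` sends `e_p` to a diagonal coefficient times `e_p` plus an off-diagonal coefficient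
times `e_{p ∘ (a b)}`, so they reduce to identities between these coefficients.
-/

/-- The Hecke R-operator on `ℂ^r ⊗ ℂ^r` as a matrix (coefficient of `u_p` in `R u_{p'}`). -/
noncomputable def heckeR (q : ℝ) (r : ℕ) : Matrix (Fin r × Fin r) (Fin r × Fin r) ℂ :=
  fun p p' =>
    if p'.1 = p'.2 then (if p = p' then 1 else 0)
    else if p'.2 < p'.1 then (if p = (p'.2, p'.1) then (q : ℂ) else 0)
    else (if p = p' then (1 - (q:ℂ)^2) else 0) + (if p = (p'.2, p'.1) then (q : ℂ) else 0)

open Classical in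
/-- `R_i`: the Hecke R-operator acting on the tensor factors `i`, `i+1` of `(ℂ^r)^{⊗k}`. -/
noncomputable def RmatK (q : ℝ) (r k : ℕ) (i : ℕ) (hi : i + 1 < k) :
    Matrix (Fin k → Fin r) (Fin k → Fin r) ℂ :=
  fun p p' =>
    heckeR q r (p ⟨i, Nat.lt_of_succ_lt hi⟩, p ⟨i + 1, hi⟩)
        (p' ⟨i, Nat.lt_of_succ_lt hi⟩, p' ⟨i + 1, hi⟩) *
      (if ∀ j : Fin k, (j : ℕ) ≠ i → (j : ℕ) ≠ i + 1 → p j = p' j then 1 else 0)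

/-- `Y_i(z,w) = f(z,w)⁻¹ (R_i + g(z,w))`. -/
noncomputable def Yop (q : ℝ) (r k : ℕ) (i : ℕ) (hi : i + 1 < k) (z w : ℂ) :
    Matrix (Fin k → Fin r) (Fin k → Fin r) ℂ :=
  (fqB q z w)⁻¹ • (RmatK q r k i hi + gqB q z w • (1 : Matrix (Fin k → Fin r) (Fin k → Fin r) ℂ))

open Equiv

section HeckeCoefficients

variable {ι : Type*} [LinearOrder ι] (q : ℝ)

noncomputable def heckeDiag (u v : ι) : ℂ :=
  if u = v then 1 else if v < u then 0 else 1 - (q : ℂ) ^ 2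

noncomputable def heckeOff (u v : ι) : ℂ :=
  if u = v then 0 else q

theorem heckeCoeff_sq_diag (u v : ι) :
    heckeDiag q u v * heckeDiag q u v + heckeOff q u v * heckeOff q v u =
      (1 - (q : ℂ) ^ 2) * heckeDiag q u v + (q : ℂ) ^ 2 := by
  unfold heckeDiag heckeOff
  split_ifs <;> first | ring1 | (exfalso; order)

theorem heckeCoeff_sq_swap (u v : ι) :
    heckeDiag q u v * heckeOff q u v + heckeOff q u v * heckeDiag q v u =
      (1 - (q : ℂ) ^ 2) * heckeOff q u v := by
  unfold heckeDiag heckeOff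
  split_ifs <;> first | ring1 | (exfalso; order)

theorem heckeCoeff_braid_diag (u v w : ι) :
    heckeDiag q u v * heckeDiag q u v * heckeDiag q v w +
        heckeOff q u v * heckeDiag q u w * heckeOff q v u =
      heckeDiag q v w * heckeDiag q v w * heckeDiag q u v +
        heckeOff q v w * heckeDiag q u w * heckeOff q w v := by
  unfold heckeDiag heckeOff
  split_ifs <;> first | ring1 | (exfalso; order)

theorem heckeCoeff_braid_swapLeft (u v w : ι) :
    heckeDiag q u v * heckeDiag q v w * heckeOff q u v +
        heckeOff q u v * heckeDiag q u w * heckeDiag q v u =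
      heckeDiag q v w * heckeOff q u v * heckeDiag q u w := by
  unfold heckeDiag heckeOff
  split_ifs <;> first | ring1 | (exfalso; order)

theorem heckeCoeff_braid_swapRight (u v w : ι) :
    heckeDiag q u v * heckeOff q v w * heckeDiag q u w =
      heckeDiag q v w * heckeDiag q u v * heckeOff q v w +
        heckeOff q v w * heckeDiag q u w * heckeDiag q w v := by
  unfold heckeDiag heckeOff
  split_ifs <;> first | ring1 | (exfalso; order)

end HeckeCoefficients

theorem heckeR_apply (q : ℝ) (r : ℕ) (x y : Fin r × Fin r) :
    heckeR q r x y = heckeDiag q y.1 y.2 * (if x = y then 1 else 0) +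
      heckeOff q y.1 y.2 * (if x = y.swap then 1 else 0) := by
  obtain ⟨u, v⟩ := y
  unfold heckeR heckeDiag heckeOff
  by_cases huv : u = v
  · subst huv
    simp
  · by_cases hvu : v < u <;> simp [huv, hvu]

section SwapComp

variable {n β : Type*} [DecidableEq n] (f : n → β)

theorem comp_swap_comp_swap (a b : n) : (f ∘ swap a b) ∘ swap a b = f := by
  ext
  simp

theorem comp_swap_braid {a b c : n} (hab : a ≠ b) (hbc : b ≠ c) (hac : a ≠ c) :
    ((f ∘ swap a b) ∘ swap b c) ∘ swap a b = ((f ∘ swap b c) ∘ swap a b) ∘ swap b c := by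
  have h : swap a b * swap b c * swap a b = swap b c * swap a b * swap b c := by
    rw [swap_comm a b, swap_comm b c, swap_mul_swap_mul_swap hbc.symm hac.symm, swap_comm c b,
      swap_comm b a, swap_mul_swap_mul_swap hab hac, swap_comm]
  ext j
  exact congrArg f (Perm.ext_iff.mp h j)

end SwapComp

section LocalHecke

variable {n : Type*} [Fintype n] [DecidableEq n] (q : ℝ) (r : ℕ)

noncomputable def heckeAt (a b : n) : Matrix (n → Fin r) (n → Fin r) ℂ :=
  fun p p' => heckeR q r (p a, p b) (p' a, p' b) *
    if ∀ j, j ≠ a → j ≠ b → p j = p' j then 1 else 0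

theorem ite_pair_eq_mul_ite_forall_ne (a b : n) (p p' : n → Fin r) :
    ((if (p a, p b) = (p' a, p' b) then 1 else 0) *
        if ∀ j, j ≠ a → j ≠ b → p j = p' j then 1 else 0 : ℂ) = if p = p' then 1 else 0 := by
  rw [ite_zero_mul_ite_zero, one_mul]
  refine if_congr ⟨fun ⟨hab, hrest⟩ => funext fun j => ?_, fun h => by simp [h]⟩ rfl rfl
  obtain ⟨ha, hb⟩ := Prod.mk.inj hab
  by_cases hja : j = a
  · rwa [hja]
  by_cases hjb : j = b
  · rwa [hjb]
  exact hrest j hja hjb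

theorem heckeAt_apply (a b : n) (p p' : n → Fin r) :
    heckeAt q r a b p p' = heckeDiag q (p' a) (p' b) * (if p = p' then 1 else 0) +
      heckeOff q (p' a) (p' b) * (if p = p' ∘ swap a b then 1 else 0) := by
  have hswap : (p' b, p' a) = ((p' ∘ swap a b) a, (p' ∘ swap a b) b) := by simp
  have hrest : (∀ j, j ≠ a → j ≠ b → p j = p' j) ↔
      ∀ j, j ≠ a → j ≠ b → p j = (p' ∘ swap a b) j :=
    forall_congr' fun j => imp_congr_right fun hja => imp_congr_right fun hjb => by
      rw [Function.comp_apply, swap_apply_of_ne_of_ne hja hjb]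
  rw [heckeAt, heckeR_apply, add_mul, mul_assoc, mul_assoc, ite_pair_eq_mul_ite_forall_ne,
    Prod.swap_prod_mk, hswap, if_congr hrest rfl rfl, ite_pair_eq_mul_ite_forall_ne]

theorem mul_heckeAt_apply (a b : n) (M : Matrix (n → Fin r) (n → Fin r) ℂ) (p p' : n → Fin r) :
    (M * heckeAt q r a b) p p' = heckeDiag q (p' a) (p' b) * M p p' +
      heckeOff q (p' a) (p' b) * M p (p' ∘ swap a b) := by
  simp [Matrix.mul_apply, heckeAt_apply, mul_add, Finset.sum_add_distrib, mul_comm]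

theorem heckeAt_mul_self (a b : n) :
    heckeAt q r a b * heckeAt q r a b = (1 - (q : ℂ) ^ 2) • heckeAt q r a b + (q : ℂ) ^ 2 • 1 := by
  ext p p'
  simp only [mul_heckeAt_apply, heckeAt_apply, Matrix.add_apply, Matrix.smul_apply,
    Matrix.one_apply, smul_eq_mul, Function.comp_apply, swap_apply_left, swap_apply_right,
    comp_swap_comp_swap]
  linear_combination heckeCoeff_sq_diag q (p' a) (p' b) * (if p = p' then 1 else 0) +
    heckeCoeff_sq_swap q (p' a) (p' b) * (if p = p' ∘ swap a b then 1 else 0)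

theorem heckeAt_braid {a b c : n} (hab : a ≠ b) (hbc : b ≠ c) (hac : a ≠ c) :
    heckeAt q r a b * heckeAt q r b c * heckeAt q r a b =
      heckeAt q r b c * heckeAt q r a b * heckeAt q r b c := by
  ext p p'
  simp only [mul_heckeAt_apply, heckeAt_apply, Function.comp_apply, swap_apply_left,
    swap_apply_right, swap_apply_of_ne_of_ne hac.symm hbc.symm,
    swap_apply_of_ne_of_ne hab hac, comp_swap_comp_swap, comp_swap_braid p' hab hbc hac]
  linear_combination heckeCoeff_braid_diag q (p' a) (p' b) (p' c) * (if p = p' then 1 else 0) +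
    heckeCoeff_braid_swapLeft q (p' a) (p' b) (p' c) * (if p = p' ∘ swap a b then 1 else 0) +
    heckeCoeff_braid_swapRight q (p' a) (p' b) (p' c) * (if p = p' ∘ swap b c then 1 else 0)

end LocalHecke

theorem RmatK_eq_heckeAt (q : ℝ) (r k i : ℕ) (hi : i + 1 < k) :
    RmatK q r k i hi = heckeAt q r ⟨i, Nat.lt_of_succ_lt hi⟩ ⟨i + 1, hi⟩ := by
  ext p p'
  simp only [RmatK, heckeAt, ne_eq, Fin.ext_iff]

theorem yangBaxter_of_quadratic_of_braid {K A : Type*} [CommRing K] [Ring A] [Algebra K A]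
    {x y : A} {t s : K} (hx : x * x = t • x + s • 1) (hy : y * y = t • y + s • 1)
    (hxy : x * y * x = y * x * y) {a b c : K} (habc : b * t + a * b + b * c = a * c) :
    (x + a • 1) * (y + b • 1) * (x + c • 1) = (y + c • 1) * (x + b • 1) * (y + a • 1) := by
  have hdiff : (x + a • 1) * (y + b • 1) * (x + c • 1) - (y + c • 1) * (x + b • 1) * (y + a • 1) =
      (b * t + a * b + b * c - a * c) • (x - y) := by
    simp only [add_mul, mul_add, smul_mul_assoc, mul_smul_comm, one_mul, mul_one]
    rw [hx, hy, hxy]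
    module
  rwa [habc, sub_self, zero_smul, sub_eq_zero] at hdiff

theorem gqB_yangBaxter (q : ℝ) {z₁ z₂ z₃ : ℂ} (h12 : z₁ ≠ z₂) (h13 : z₁ ≠ z₃) (h23 : z₂ ≠ z₃) :
    gqB q z₁ z₃ * (1 - (q : ℂ) ^ 2) + gqB q z₂ z₃ * gqB q z₁ z₃ + gqB q z₁ z₃ * gqB q z₁ z₂ =
      gqB q z₂ z₃ * gqB q z₁ z₂ := by
  have := sub_ne_zero.2 h12
  have := sub_ne_zero.2 h13
  have := sub_ne_zero.2 h23
  unfold gqB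
  field_simp
  ring

theorem Yop_yang_baxter_general (q : ℝ) (r k : ℕ) (i : ℕ) (hi : i + 2 < k) (z₁ z₂ z₃ : ℂ)
    (h12 : z₁ ≠ z₂) (h13 : z₁ ≠ z₃) (h23 : z₂ ≠ z₃) :
    Yop q r k i (Nat.lt_of_succ_lt hi) z₂ z₃ *
        Yop q r k (i + 1) hi z₁ z₃ *
        Yop q r k i (Nat.lt_of_succ_lt hi) z₁ z₂
      = Yop q r k (i + 1) hi z₁ z₂ *
          Yop q r k i (Nat.lt_of_succ_lt hi) z₁ z₃ *
          Yop q r k (i + 1) hi z₂ z₃ := by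
  have hab : (⟨i, by omega⟩ : Fin k) ≠ ⟨i + 1, by omega⟩ :=
    Fin.ne_of_val_ne (by dsimp only; omega)
  have hbc : (⟨i + 1, by omega⟩ : Fin k) ≠ ⟨i + 1 + 1, hi⟩ :=
    Fin.ne_of_val_ne (by dsimp only; omega)
  have hac : (⟨i, by omega⟩ : Fin k) ≠ ⟨i + 1 + 1, hi⟩ :=
    Fin.ne_of_val_ne (by dsimp only; omega)
  have hyb := yangBaxter_of_quadratic_of_braid (heckeAt_mul_self q r _ _)
    (heckeAt_mul_self q r _ _) (heckeAt_braid q r hab hbc hac) (gqB_yangBaxter q h12 h13 h23)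
  simp only [Yop, RmatK_eq_heckeAt, smul_mul_assoc, mul_smul_comm, smul_smul]
  rw [hyb]
  congr 1
  ring

/-- The Yang–Baxter relation
`Y_i(z₂,z₃) Y_{i+1}(z₁,z₃) Y_i(z₁,z₂) = Y_{i+1}(z₁,z₂) Y_i(z₁,z₃) Y_{i+1}(z₂,z₃)`. -/
theorem Yop_yang_baxter (q : ℝ) (hq : 0 < q) (hq1 : q < 1) (r k : ℕ) (hr : 0 < r)
    (hk : 3 ≤ k) (i : ℕ) (hi : i + 2 < k) (z₁ z₂ z₃ : ℂ)
    (h12 : z₁ ≠ z₂) (h13 : z₁ ≠ z₃) (h23 : z₂ ≠ z₃)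
    (hf12 : z₁ ≠ (q:ℂ)^2 * z₂) (hf21 : z₂ ≠ (q:ℂ)^2 * z₁)
    (hf13 : z₁ ≠ (q:ℂ)^2 * z₃) (hf31 : z₃ ≠ (q:ℂ)^2 * z₁)
    (hf23 : z₂ ≠ (q:ℂ)^2 * z₃) (hf32 : z₃ ≠ (q:ℂ)^2 * z₂) :
    Yop q r k i (Nat.lt_of_succ_lt hi) z₂ z₃ *
        Yop q r k (i + 1) hi z₁ z₃ *
        Yop q r k i (Nat.lt_of_succ_lt hi) z₁ z₂
      = Yop q r k (i + 1) hi z₁ z₂ *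
          Yop q r k i (Nat.lt_of_succ_lt hi) z₁ z₃ *
          Yop q r k (i + 1) hi z₂ z₃ :=
  Yop_yang_baxter_general q r k i hi z₁ z₂ z₃ h12 h13 h23
end

section
/- Let r=1 and define C^{[M',M]}(z) as the (1,0)-entry (bottom-left) of the product L^{(M')}(z)···L^{(M)}(z) of 2×2 L-operators L^{(i)}(z) = [[1+z q^{2N_i}, β_i*],[z β_i, z]] with entries in the q-boson algebras at sites M',...,M. Then for any z, w, the operators C^{[M',M]}(z) and C^{[M',M]}(w) commute. -/
/-!
The bottom row `(C(z), D(z))` of the monodromy matrix satisfies, for all spectral parameters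
`z, w` and with `Q = q²`, the exchange relations

* `C(z) C(w) = C(w) C(z)`, `D(z) D(w) = D(w) D(z)`,
* `z D(z) C(w) + w C(z) D(w) = w D(w) C(z) + z C(w) D(z)`,
* `C(z) D(w) + Q D(z) C(w) = C(w) D(z) + Q D(w) C(z)`,

which are the bottom-row part of the RLL relation. They hold trivially for the bottom row `(0, 1)`
of the empty product, and they survive right multiplication by one more L-operator, because the
entries of the new L-operator commute with the old row and satisfy the q-boson relations: each new
relation is an explicit linear combination of the old ones.
-/

/-- Operators on the (coefficient realization of the) tensor product of Fock spaces
over the sites `i ∈ ℤ`: a state is an occupation function `m : ℤ → ℕ`, and a vector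
is a coefficient function `v : (ℤ → ℕ) → ℂ`. -/
abbrev QBOp : Type := ((ℤ → ℕ) → ℂ) → ((ℤ → ℕ) → ℂ)

/-- `q^{N_i}` at site `i`. -/
noncomputable def siteQN (q : ℝ) (i : ℤ) : QBOp := fun v m => (q:ℂ)^(m i) * v m

/-- `β_i*` at site `i`. -/
noncomputable def siteBetaStar (i : ℤ) : QBOp := fun v m =>
  if m i = 0 then 0 else v (Function.update m i (m i - 1))

/-- `β_i` at site `i`. -/
noncomputable def siteBeta (q : ℝ) (i : ℤ) : QBOp := fun v m =>
  (1 - (q:ℂ)^(2 * (m i + 1))) * v (Function.update m i (m i + 1))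

/-- Entry `L^{(i)}(z)_{00} = 1 + z q^{2N_i}`. -/
noncomputable def L00 (q : ℝ) (z : ℂ) (i : ℤ) : QBOp :=
  fun v => v + z • siteQN q i (siteQN q i v)

/-- Entry `L^{(i)}(z)_{01} = β_i*`. -/
noncomputable def L01 (i : ℤ) : QBOp := siteBetaStar i

/-- Entry `L^{(i)}(z)_{10} = z β_i`. -/
noncomputable def L10 (q : ℝ) (z : ℂ) (i : ℤ) : QBOp := fun v => z • siteBeta q i v

/-- Entry `L^{(i)}(z)_{11} = z`. -/
noncomputable def L11 (z : ℂ) : QBOp := fun v => z • v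

/-- The four entries `(T_{00}, T_{01}, T_{10}, T_{11})` of the monodromy matrix
`L^{(s)}(z) L^{(s+1)}(z) ⋯ L^{(s+n)}(z)`. -/
noncomputable def monodromy (q : ℝ) (z : ℂ) (s : ℤ) :
    ℕ → QBOp × QBOp × QBOp × QBOp
  | 0 => (L00 q z s, L01 s, L10 q z s, L11 z)
  | n + 1 =>
      let p := monodromy q z s n
      let j : ℤ := s + (n : ℤ) + 1
      (p.1 ∘ L00 q z j + p.2.1 ∘ L10 q z j,
       p.1 ∘ L01 j + p.2.1 ∘ L11 z,
       p.2.2.1 ∘ L00 q z j + p.2.2.2 ∘ L10 q z j,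
       p.2.2.1 ∘ L01 j + p.2.2.2 ∘ L11 z)

/-- `A^{[M',M]}(z)`, the `(0,0)`-entry of the monodromy matrix over `[M', M]`. -/
noncomputable def Aop (q : ℝ) (z : ℂ) (M' M : ℤ) : QBOp :=
  (monodromy q z M' (M - M').toNat).1

/-- `C^{[M',M]}(z)`, the `(1,0)`-entry of the monodromy matrix over `[M', M]`. -/
noncomputable def Cop (q : ℝ) (z : ℂ) (M' M : ℤ) : QBOp :=
  (monodromy q z M' (M - M').toNat).2.2.1



section ExchangeRelations

variable {A : Type*} [Ring A] [Algebra ℂ A]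

/-- The q-boson relations for `β`, `β' = β*` and `κ = q^{2N}`, with `Q = q²`. -/
structure IsQBoson (Q : ℂ) (β β' κ : A) : Prop where
  mul_star : β * β' = 1 - Q • κ
  star_mul : β' * β = 1 - κ
  mul_kappa : β * κ = Q • (κ * β)
  kappa_mul_star : κ * β' = Q • (β' * κ)

structure CommutesWithSite (β β' κ x : A) : Prop where
  beta : Commute β x
  betaStar : Commute β' x
  kappa : Commute κ x

structure RowExchange (Q z w : ℂ) (Cz Dz Cw Dw : A) : Prop where
  comm_C : Commute Cz Cw
  comm_D : Commute Dz Dw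
  DC : z • (Dz * Cw) + w • (Cz * Dw) = w • (Dw * Cz) + z • (Cw * Dz)
  CD : Cz * Dw + Q • (Dz * Cw) = Cw * Dz + Q • (Dw * Cz)

/-- Right multiplication of the row `(C, D)` by `L(z) = [[1 + z κ, β'], [z β, z]]`. -/
theorem RowExchange.mul_L {Q z w : ℂ} {β β' κ Cz Dz Cw Dw : A}
    (h : RowExchange Q z w Cz Dz Cw Dw) (hs : IsQBoson Q β β' κ)
    (hCz : CommutesWithSite β β' κ Cz) (hDz : CommutesWithSite β β' κ Dz)
    (hCw : CommutesWithSite β β' κ Cw) (hDw : CommutesWithSite β β' κ Dw) :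
    RowExchange Q z w (Cz * (1 + z • κ) + z • (Dz * β)) (Cz * β' + z • Dz)
      (Cw * (1 + w • κ) + w • (Dw * β)) (Cw * β' + w • Dw) := by
  obtain ⟨hC, hD, hDC, hCD⟩ := h
  constructor
  -- normal form: row entries to the left, site operators reduced by the q-boson relations
  all_goals simp only [commute_iff_eq, mul_add, add_mul, mul_sub, mul_one,
      smul_mul_assoc, mul_smul_comm, smul_smul, smul_sub, smul_add, mul_assoc,
      hCz.beta.eq, hCz.betaStar.eq, hCz.kappa.eq, hCw.beta.eq, hCw.betaStar.eq, hCw.kappa.eq,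
      hDz.beta.eq, hDz.betaStar.eq, hDz.kappa.eq, hDw.beta.eq, hDw.betaStar.eq, hDw.kappa.eq,
      hCz.beta.left_comm, hCz.betaStar.left_comm, hCz.kappa.left_comm,
      hCw.beta.left_comm, hCw.betaStar.left_comm, hCw.kappa.left_comm,
      hDz.beta.left_comm, hDz.betaStar.left_comm, hDz.kappa.left_comm,
      hDw.beta.left_comm, hDw.betaStar.left_comm, hDw.kappa.left_comm,
      hC.symm.eq, hD.symm.eq, hC.symm.left_comm, hD.symm.left_comm,
      hs.mul_star, hs.star_mul, hs.mul_kappa, hs.kappa_mul_star]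
  · linear_combination (norm := (simp only [add_mul, smul_mul_assoc, mul_assoc]; module))
      hDC * β + (z * w) • (hCD * (κ * β))
  · linear_combination (norm := (simp only [add_mul, smul_mul_assoc, mul_assoc]; module))
      hDC * β'
  · linear_combination (norm := (simp only [add_mul, smul_mul_assoc, mul_assoc]; module))
      (z + w) • hDC + (z * w) • (hDC * κ) - (z * w) • (hCD * κ)
  · linear_combination (norm := (simp only [add_mul, smul_mul_assoc, mul_assoc]; module))
      (1 + Q) • hDC + (z * w) • (hCD * κ) - Q • (hDC * κ)

theorem rowExchange_zero_one (Q z w : ℂ) : RowExchange Q z w (0 : A) 1 0 1 :=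
  ⟨Commute.zero_left 0, Commute.one_left 1, by simp, by simp⟩

end ExchangeRelations

abbrev QBVec : Type := (ℤ → ℕ) → ℂ

noncomputable def siteOp (i : ℤ) (c : ℕ → ℂ) (g : ℕ → ℕ) : Module.End ℂ QBVec where
  toFun v m := c (m i) * v (Function.update m i (g (m i)))
  map_add' u v := by funext m; simp [mul_add]
  map_smul' r v := by funext m; simp only [Pi.smul_apply, smul_eq_mul, RingHom.id_apply]; ring

@[simp] lemma siteOp_apply (i : ℤ) (c : ℕ → ℂ) (g : ℕ → ℕ) (v : QBVec) (m : ℤ → ℕ) :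
    siteOp i c g v m = c (m i) * v (Function.update m i (g (m i))) := rfl

lemma siteOp_commute {i j : ℤ} (hij : i ≠ j) (c g c' g') :
    Commute (siteOp i c g) (siteOp j c' g') := by
  ext v m
  simp only [Module.End.mul_apply, siteOp_apply]
  rw [Function.update_of_ne hij.symm, Function.update_of_ne hij, Function.update_comm hij]
  ring

noncomputable def betaOp (q : ℝ) (i : ℤ) : Module.End ℂ QBVec :=
  siteOp i (fun n => 1 - (q : ℂ) ^ (2 * (n + 1))) (· + 1)

noncomputable def betaStarOp (i : ℤ) : Module.End ℂ QBVec :=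
  siteOp i (fun n => if n = 0 then 0 else 1) (· - 1)

noncomputable def kappaOp (q : ℝ) (i : ℤ) : Module.End ℂ QBVec :=
  siteOp i (fun n => (q : ℂ) ^ (2 * n)) id

theorem isQBoson_betaOp (q : ℝ) (i : ℤ) :
    IsQBoson ((q : ℂ) ^ 2) (betaOp q i) (betaStarOp i) (kappaOp q i) := by
  constructor <;> ext v m
  · simp [betaOp, betaStarOp, kappaOp, pow_succ, mul_add]
    ring
  · by_cases h : m i = 0
    · have hm : Function.update m i 0 = m := by rw [← h, Function.update_eq_self]
      simp [betaOp, betaStarOp, kappaOp, h, hm]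
    · simp [betaOp, betaStarOp, kappaOp, h, Nat.sub_add_cancel (Nat.one_le_iff_ne_zero.mpr h)]
      ring
  · simp [betaOp, kappaOp, pow_succ, mul_add]
    ring
  · by_cases h : m i = 0
    · simp [betaStarOp, kappaOp, h]
    · obtain ⟨k, hk⟩ := Nat.exists_eq_succ_of_ne_zero h
      simp [betaStarOp, kappaOp, hk, pow_succ, mul_add]
      ring

/-- The bottom row of `L^{(s)}(z) ⋯ L^{(s+n-1)}(z)`; `n = 0` is the empty product. -/
noncomputable def bottomRow (q : ℝ) (z : ℂ) (s : ℤ) :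
    ℕ → Module.End ℂ QBVec × Module.End ℂ QBVec
  | 0 => (0, 1)
  | n + 1 =>
      let j := s + n
      ((bottomRow q z s n).1 * (1 + z • kappaOp q j) + z • ((bottomRow q z s n).2 * betaOp q j),
       (bottomRow q z s n).1 * betaStarOp j + z • (bottomRow q z s n).2)

theorem bottomRow_commute_siteOp (q : ℝ) (z : ℂ) (s : ℤ) (n : ℕ) {j : ℤ} (hj : s + n ≤ j)
    (c : ℕ → ℂ) (g : ℕ → ℕ) :
    Commute (siteOp j c g) (bottomRow q z s n).1 ∧
      Commute (siteOp j c g) (bottomRow q z s n).2 := by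
  induction n with
  | zero => exact ⟨Commute.zero_right _, Commute.one_right _⟩
  | succ n ih =>
    obtain ⟨hC, hD⟩ := ih (by omega)
    have hsite (c' g') : Commute (siteOp j c g) (siteOp (s + n) c' g') :=
      siteOp_commute (by omega) _ _ _ _
    exact ⟨(hC.mul_right ((Commute.one_right _).add_right ((hsite _ _).smul_right z))).add_right
        ((hD.mul_right (hsite _ _)).smul_right z),
      (hC.mul_right (hsite _ _)).add_right (hD.smul_right z)⟩

theorem bottomRow_commutesWithSite (q : ℝ) (z : ℂ) (s : ℤ) (n : ℕ) :
    CommutesWithSite (betaOp q (s + n)) (betaStarOp (s + n)) (kappaOp q (s + n))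
      (bottomRow q z s n).1 ∧
    CommutesWithSite (betaOp q (s + n)) (betaStarOp (s + n)) (kappaOp q (s + n))
      (bottomRow q z s n).2 :=
  have h := bottomRow_commute_siteOp q z s n le_rfl
  ⟨⟨(h _ _).1, (h _ _).1, (h _ _).1⟩, ⟨(h _ _).2, (h _ _).2, (h _ _).2⟩⟩

theorem rowExchange_bottomRow (q : ℝ) (z w : ℂ) (s : ℤ) (n : ℕ) :
    RowExchange ((q : ℂ) ^ 2) z w (bottomRow q z s n).1 (bottomRow q z s n).2
      (bottomRow q w s n).1 (bottomRow q w s n).2 := by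
  induction n with
  | zero => exact rowExchange_zero_one _ z w
  | succ n ih =>
    obtain ⟨hCz, hDz⟩ := bottomRow_commutesWithSite q z s n
    obtain ⟨hCw, hDw⟩ := bottomRow_commutesWithSite q w s n
    exact ih.mul_L (isQBoson_betaOp q _) hCz hDz hCw hDw

theorem L00_eq (q : ℝ) (z : ℂ) (i : ℤ) : L00 q z i = ⇑(1 + z • kappaOp q i) := by
  funext v m
  simp [L00, kappaOp, siteQN, pow_mul', sq, mul_assoc]

theorem L01_eq (i : ℤ) : L01 i = ⇑(betaStarOp i) := by
  funext v m
  by_cases h : m i = 0 <;> simp [L01, betaStarOp, siteBetaStar, h]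

theorem L10_eq (q : ℝ) (z : ℂ) (i : ℤ) : L10 q z i = ⇑(z • betaOp q i) := by
  funext v m
  simp [L10, betaOp, siteBeta]

theorem L11_eq (z : ℂ) : L11 z = ⇑(z • (1 : Module.End ℂ QBVec)) := rfl

theorem monodromy_bottomRow (q : ℝ) (z : ℂ) (s : ℤ) (n : ℕ) :
    (monodromy q z s n).2.2.1 = ⇑(bottomRow q z s (n + 1)).1 ∧
    (monodromy q z s n).2.2.2 = ⇑(bottomRow q z s (n + 1)).2 := by
  induction n with
  | zero =>
    rw [bottomRow.eq_2 q z s 0, bottomRow, monodromy, L10_eq, L11_eq]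
    constructor <;> funext v <;> simp
  | succ n ih =>
    obtain ⟨hC, hD⟩ := ih
    rw [bottomRow.eq_2 q z s (n + 1), monodromy, hC, hD, L00_eq, L01_eq, L10_eq, L11_eq,
      Nat.cast_succ, ← add_assoc]
    constructor <;> funext v <;> simp

theorem Cop_comm_general (q : ℝ) (M' M : ℤ) (z w : ℂ) :
    Cop q z M' M ∘ Cop q w M' M = Cop q w M' M ∘ Cop q z M' M := by
  simp only [Cop, (monodromy_bottomRow q _ M' _).1, ← Module.End.coe_mul]
  rw [(rowExchange_bottomRow q z w M' _).comm_C.eq]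

/-- The operators `C^{[M',M]}(z)` and `C^{[M',M]}(w)` commute. -/
theorem Cop_comm (q : ℝ) (hq : 0 < q) (hq1 : q < 1) (M' M : ℤ) (hMM : M' ≤ M)
    (z w : ℂ) :
    Cop q z M' M ∘ Cop q w M' M = Cop q w M' M ∘ Cop q z M' M :=
  Cop_comm_general q M' M z w
end
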